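/- Let s ∈ (1/2, 1] and let G_s = F_s·F_s'. Then G_s is continuously differentiable on ℝ, and G_s' is bounded and uniformly continuous on ℝ. -/

import Mathlib

/-!
On `|t| ≤ 1`, `F_s` is a combination `A(t) = ∑ cᵢ |t| ^ pᵢ` of absolute powers with exponents
`pᵢ ∈ {s + 5/2, s + 3/2, s + 1/2}`, all `> 1`. For such an `A`, `A A' = (A²)' / 2`, and `A²` is
again such a combination, now with exponents `pᵢ + pⱼ > 2`; so `A A'` is a combination of the odd
powers `|t| ^ e * t` with `e > 0`, which are `C¹` also at `0`. For `|t| ≥ 1`,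
`G_s(t) = s |t| ^ (2s-2) t` and `G_s'(t) = s (2s-1) |t| ^ (2s-2)`. Values and derivatives of the
two pieces of `F_s` and of `G_s` agree at `|t| = 1`. Off `[-1, 1]`, `G_s'` coincides with the
Lipschitz function `s (2s-1) max(|t|, 1) ^ (2s-2)`, whence boundedness and uniform continuity.
-/

/-- The cutoff function `θ` of Definition 4.3: `θ(t) = (3/8)|t|^{1/2}(|t|² − (10/3)|t| + 5)`
for `|t| ≤ 1` and `θ(t) = 1` for `|t| > 1`. -/
noncomputable def theta (t : ℝ) : ℝ :=
  if |t| ≤ 1 then (3 / 8) * |t| ^ ((1 : ℝ) / 2) * (|t| ^ 2 - (10 / 3) * |t| + 5) else 1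

/-- The auxiliary function `F_s(t) = θ(t)·|t|^s` of Definition 4.3. -/
noncomputable def Fs (s t : ℝ) : ℝ := theta t * |t| ^ s

open Real Set Filter Topology

theorem hasDerivAt_ite_le {𝕜 F : Type*} [NontriviallyNormedField 𝕜] [NormedAddCommGroup F]
    [NormedSpace 𝕜 F] {ρ : 𝕜 → ℝ} {c : ℝ} {f g : 𝕜 → F} {f' g' : F} {x : 𝕜}
    (hρ : ContinuousAt ρ x) (hf : ρ x ≤ c → HasDerivAt f f' x) (hg : c ≤ ρ x → HasDerivAt g g' x)
    (hfg : ∀ y, ρ y = c → f y = g y) (hfg' : ρ x = c → f' = g') :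
    HasDerivAt (fun y => if ρ y ≤ c then f y else g y) (if ρ x ≤ c then f' else g') x := by
  rcases lt_trichotomy (ρ x) c with hx | hx | hx
  · rw [if_pos hx.le]
    refine (hf hx.le).congr_of_eventuallyEq ?_
    filter_upwards [hρ.eventually_lt continuousAt_const hx] with y hy using if_pos hy.le
  · rw [if_pos hx.le, hfg' hx]
    have hle : HasDerivWithinAt (fun y => if ρ y ≤ c then f y else g y) g' {y | ρ y ≤ c} x :=
      (hfg' hx ▸ hf hx.le).hasDerivWithinAt.congr (fun y hy => if_pos hy) (if_pos hx.le)
    have hge : HasDerivWithinAt (fun y => if ρ y ≤ c then f y else g y) g' {y | c ≤ ρ y} x := by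
      refine (hg hx.ge).hasDerivWithinAt.congr (fun y hy => ?_) ?_
      · split_ifs with h
        exacts [hfg y (le_antisymm h hy), rfl]
      · rw [if_pos hx.le, hfg x hx]
    have := hle.union hge
    rwa [show {y | ρ y ≤ c} ∪ {y | c ≤ ρ y} = univ from eq_univ_of_forall fun y => le_total (ρ y) c,
      hasDerivWithinAt_univ] at this
  · rw [if_neg hx.not_ge]
    refine (hg hx.le).congr_of_eventuallyEq ?_
    filter_upwards [continuousAt_const.eventually_lt hρ hx] with y hy using if_neg hy.not_ge

theorem hasDerivAt_abs_rpow_of_ne_zero {t : ℝ} (ht : t ≠ 0) (p : ℝ) :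
    HasDerivAt (fun u : ℝ => |u| ^ p) (p * |t| ^ (p - 2) * t) t := by
  convert (hasDerivAt_abs ht).rpow_const (p := p) (Or.inl (abs_ne_zero.2 ht)) using 1
  have ha : |t| ≠ 0 := abs_ne_zero.2 ht
  rw [show p - 1 = p - 2 + 1 by ring, rpow_add_one ha]
  nth_rw 2 [← sign_mul_abs t]
  ring

theorem hasDerivAt_abs_rpow_mul {e t : ℝ} (h : 0 < e ∨ t ≠ 0) :
    HasDerivAt (fun u : ℝ => |u| ^ e * u) ((e + 1) * |t| ^ e) t := by
  rcases eq_or_ne t 0 with rfl | ht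
  · have he : 0 < e := h.resolve_right (not_not.2 rfl)
    rw [hasDerivAt_iff_tendsto_slope, abs_zero, zero_rpow he.ne', mul_zero]
    have hcont : Tendsto (fun u : ℝ => |u| ^ e) (𝓝[≠] 0) (𝓝 0) := by
      simpa [zero_rpow he.ne'] using
        ((continuous_abs.rpow_const fun _ => Or.inr he.le).tendsto 0).mono_left nhdsWithin_le_nhds
    refine hcont.congr' ?_
    filter_upwards [self_mem_nhdsWithin] with u hu
    simp [slope_def_field, mul_div_cancel_right₀ _ (show u ≠ 0 from hu)]
  · refine ((hasDerivAt_abs_rpow_of_ne_zero ht e).mul (hasDerivAt_id' t)).congr_deriv ?_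
    rw [mul_one, mul_assoc, ← abs_mul_abs_self, rpow_sub (abs_pos.2 ht), rpow_two]
    field_simp

section AbsPowSum

variable {ι : Type*} [Fintype ι] {c p : ι → ℝ}

theorem hasDerivAt_sum_abs_rpow (hp : ∀ i, 1 < p i) (t : ℝ) :
    HasDerivAt (fun u => ∑ i, c i * |u| ^ p i) (∑ i, c i * (p i * |t| ^ (p i - 2) * t)) t :=
  HasDerivAt.fun_sum fun i _ => (hasDerivAt_abs_rpow t (hp i)).const_mul (c i)

theorem hasDerivAt_sum_abs_rpow_mul {e : ι → ℝ} (he : ∀ i, 0 < e i) (t : ℝ) :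
    HasDerivAt (fun u => ∑ i, c i * (|u| ^ e i * u)) (∑ i, c i * ((e i + 1) * |t| ^ e i)) t :=
  HasDerivAt.fun_sum fun i _ => (hasDerivAt_abs_rpow_mul (Or.inl (he i))).const_mul (c i)

theorem sum_abs_rpow_sq (hp : ∀ i, 0 < p i) (t : ℝ) :
    (∑ i, c i * |t| ^ p i) ^ 2 = ∑ ij : ι × ι, c ij.1 * c ij.2 * |t| ^ (p ij.1 + p ij.2) := by
  rw [sq, Finset.sum_mul_sum, ← Finset.sum_product']
  refine Finset.sum_congr rfl fun ij _ => ?_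
  rw [rpow_add' (abs_nonneg t) (add_pos (hp ij.1) (hp ij.2)).ne']
  ring

theorem sum_abs_rpow_mul_deriv (hp : ∀ i, 1 < p i) (t : ℝ) :
    (∑ i, c i * |t| ^ p i) * ∑ i, c i * (p i * |t| ^ (p i - 2) * t) =
      ∑ ij : ι × ι, c ij.1 * c ij.2 * (p ij.1 + p ij.2) / 2 *
        (|t| ^ (p ij.1 + p ij.2 - 2) * t) := by
  have hsq : HasDerivAt (fun u => (∑ i, c i * |u| ^ p i) ^ 2)
      (∑ ij : ι × ι, c ij.1 * c ij.2 * ((p ij.1 + p ij.2) * |t| ^ (p ij.1 + p ij.2 - 2) * t))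
      t := by
    simp_rw [sum_abs_rpow_sq (fun i => (zero_lt_one.trans (hp i)))]
    exact hasDerivAt_sum_abs_rpow (fun ij => by linarith [hp ij.1, hp ij.2]) t
  have hprod := ((hasDerivAt_sum_abs_rpow (c := c) hp t).pow 2).unique hsq
  push_cast [pow_one] at hprod
  calc _ = 2 * (∑ i, c i * |t| ^ p i) * (∑ i, c i * (p i * |t| ^ (p i - 2) * t)) / 2 := by
          ring
    _ = _ := by
      rw [hprod, Finset.sum_div]
      exact Finset.sum_congr rfl fun _ _ => by ring

theorem hasDerivAt_sum_abs_rpow_mul_deriv (hp : ∀ i, 1 < p i) (t : ℝ) :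
    HasDerivAt (fun u => (∑ i, c i * |u| ^ p i) * ∑ i, c i * (p i * |u| ^ (p i - 2) * u))
      (∑ ij : ι × ι, c ij.1 * c ij.2 * (p ij.1 + p ij.2) / 2 *
        ((p ij.1 + p ij.2 - 1) * |t| ^ (p ij.1 + p ij.2 - 2))) t := by
  simp_rw [sum_abs_rpow_mul_deriv hp]
  refine (hasDerivAt_sum_abs_rpow_mul (fun ij => by linarith [hp ij.1, hp ij.2]) t).congr_deriv ?_
  exact Finset.sum_congr rfl fun _ _ => by ring

end AbsPowSum

theorem Continuous.exists_bound_of_eqOn_compl {α β : Type*} [TopologicalSpace α]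
    [SeminormedAddCommGroup β] {f g : α → β} {K : Set α} {M : ℝ} (hf : Continuous f)
    (hK : IsCompact K) (hfg : EqOn f g Kᶜ) (hg : ∀ x, ‖g x‖ ≤ M) : ∃ C, ∀ x, ‖f x‖ ≤ C := by
  obtain ⟨C, hC⟩ := hK.exists_bound_of_continuousOn hf.continuousOn
  refine ⟨max C M, fun x => ?_⟩
  by_cases hx : x ∈ K
  · exact (hC x hx).trans (le_max_left _ _)
  · exact (hfg hx ▸ hg x).trans (le_max_right _ _)

theorem Continuous.uniformContinuous_of_eqOn_compl {α β : Type*} [UniformSpace α] [R1Space α]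
    [UniformSpace β] [AddGroup β] [IsUniformAddGroup β] {f g : α → β} {K : Set α}
    (hf : Continuous f) (hK : IsCompact K) (hfg : EqOn f g Kᶜ) (hg : UniformContinuous g) :
    UniformContinuous f := by
  have hsupp : HasCompactSupport (f - g) :=
    HasCompactSupport.intro hK fun x hx => sub_eq_zero.2 (hfg hx)
  simpa using (hsupp.uniformContinuous_of_continuous (hf.sub hg.continuous)).add hg

theorem lipschitzWith_max_abs_one_rpow {r : ℝ} (hr : r ≤ 0) :
    LipschitzWith ‖r‖₊ fun t : ℝ => max |t| 1 ^ r := by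
  have hpow : LipschitzOnWith ‖r‖₊ (fun x : ℝ => x ^ r) (Ici 1) := by
    refine (convex_Ici 1).lipschitzOnWith_of_nnnorm_hasDerivWithin_le (fun x hx =>
      (hasDerivAt_rpow_const (Or.inl (one_pos.trans_le hx).ne')).hasDerivWithinAt) fun x hx => ?_
    rw [nnnorm_mul]
    refine mul_le_of_le_one_right (by positivity) ?_
    rw [← NNReal.coe_le_coe, coe_nnnorm, norm_of_nonneg (rpow_nonneg (zero_le_one.trans hx) _),
      NNReal.coe_one]
    exact rpow_le_one_of_one_le_of_nonpos hx (by linarith)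
  have hmax : LipschitzWith 1 fun t : ℝ => max |t| 1 := by
    simpa only [Real.norm_eq_abs] using (lipschitzWith_one_norm (E := ℝ)).max_const 1
  simpa only [mul_one, Function.comp_def] using lipschitzOnWith_univ.1
    (hpow.comp hmax.lipschitzOnWith fun t _ => show 1 ≤ max |t| 1 from le_max_right _ _)

noncomputable def cutoffCoeff : Fin 3 → ℝ := ![3 / 8, -5 / 4, 15 / 8]

noncomputable def cutoffExp (s : ℝ) : Fin 3 → ℝ := ![s + 5 / 2, s + 3 / 2, s + 1 / 2]

theorem Fs_eq_sum {s t : ℝ} (hs : -(1 / 2) < s) (ht : |t| ≤ 1) :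
    Fs s t = ∑ i, cutoffCoeff i * |t| ^ cutoffExp s i := by
  have hx := abs_nonneg t
  have h1 : |t| ^ (s + 1 / 2) = |t| ^ ((1 : ℝ) / 2) * |t| ^ s := by
    rw [add_comm, rpow_add' hx (by linarith)]
  have h2 : |t| ^ (s + 3 / 2) = |t| ^ (s + 1 / 2) * |t| := by
    rw [← rpow_add_one' hx (by linarith)]; ring_nf
  have h3 : |t| ^ (s + 5 / 2) = |t| ^ (s + 1 / 2) * |t| ^ 2 := by
    rw [← rpow_natCast, ← rpow_add' hx (by norm_num; linarith)]; ring_nf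
  simp only [Fs, theta, if_pos ht, Fin.sum_univ_three, cutoffCoeff, cutoffExp, Matrix.cons_val]
  rw [h3, h2, h1]
  ring

theorem Fs_of_one_le_abs {s t : ℝ} (ht : 1 ≤ |t|) : Fs s t = |t| ^ s := by
  rcases ht.eq_or_lt with ht | ht
  · simp only [Fs, theta, ← ht, le_refl, if_true, one_rpow, one_pow]
    norm_num
  · simp [Fs, theta, not_le.2 ht]

theorem Fs_eq_ite {s : ℝ} (hs : -(1 / 2) < s) :
    Fs s = fun t => if |t| ≤ 1 then ∑ i, cutoffCoeff i * |t| ^ cutoffExp s i else |t| ^ s := by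
  ext t
  split_ifs with ht
  exacts [Fs_eq_sum hs ht, Fs_of_one_le_abs (le_of_not_ge ht)]

theorem one_lt_cutoffExp {s : ℝ} (hs : 1 / 2 < s) (i : Fin 3) : 1 < cutoffExp s i := by
  fin_cases i <;> simp [cutoffExp] <;> linarith

theorem sum_cutoff_of_abs_eq_one {s t : ℝ} (ht : |t| = 1) :
    ∑ i, cutoffCoeff i * |t| ^ cutoffExp s i = |t| ^ s := by
  simp [ht, Fin.sum_univ_three, cutoffCoeff]
  norm_num

theorem sum_cutoff_deriv_of_abs_eq_one {s t : ℝ} (ht : |t| = 1) :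
    ∑ i, cutoffCoeff i * (cutoffExp s i * |t| ^ (cutoffExp s i - 2) * t) =
      s * |t| ^ (s - 2) * t := by
  simp [ht, Fin.sum_univ_three, cutoffCoeff, cutoffExp]
  ring

theorem sum_cutoff_mul_deriv_deriv_of_abs_eq_one {s t : ℝ} (ht : |t| = 1) :
    ∑ ij : Fin 3 × Fin 3, cutoffCoeff ij.1 * cutoffCoeff ij.2 *
        (cutoffExp s ij.1 + cutoffExp s ij.2) / 2 *
        ((cutoffExp s ij.1 + cutoffExp s ij.2 - 1) *
          |t| ^ (cutoffExp s ij.1 + cutoffExp s ij.2 - 2)) =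
      s * (2 * s - 1) * |t| ^ (2 * s - 2) := by
  simp [ht, Fintype.sum_prod_type, Fin.sum_univ_three, cutoffCoeff, cutoffExp]
  ring

theorem hasDerivAt_abs_rpow_mul_deriv_of_ne_zero (s : ℝ) {t : ℝ} (ht : t ≠ 0) :
    HasDerivAt (fun u : ℝ => |u| ^ s * (s * |u| ^ (s - 2) * u))
      (s * (2 * s - 1) * |t| ^ (2 * s - 2)) t := by
  have hpow : (fun u : ℝ => s * (|u| ^ (2 * s - 2) * u)) =ᶠ[𝓝 t]
      fun u => |u| ^ s * (s * |u| ^ (s - 2) * u) := by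
    filter_upwards [eventually_ne_nhds ht] with u hu
    rw [show 2 * s - 2 = s + (s - 2) by ring, rpow_add (abs_pos.2 hu)]
    ring
  refine (((hasDerivAt_abs_rpow_mul (Or.inr ht)).const_mul s).congr_of_eventuallyEq
    hpow.symm).congr_deriv ?_
  ring

noncomputable def FsDeriv (s t : ℝ) : ℝ :=
  if |t| ≤ 1 then ∑ i, cutoffCoeff i * (cutoffExp s i * |t| ^ (cutoffExp s i - 2) * t)
  else s * |t| ^ (s - 2) * t

theorem hasDerivAt_Fs {s : ℝ} (hs : 1 / 2 < s) (t : ℝ) : HasDerivAt (Fs s) (FsDeriv s t) t := by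
  rw [Fs_eq_ite (by linarith)]
  exact hasDerivAt_ite_le continuous_abs.continuousAt
    (fun _ => hasDerivAt_sum_abs_rpow (one_lt_cutoffExp hs) t)
    (fun ht => hasDerivAt_abs_rpow_of_ne_zero (abs_pos.1 (one_pos.trans_le ht)) s)
    (fun _ hu => sum_cutoff_of_abs_eq_one hu) sum_cutoff_deriv_of_abs_eq_one

noncomputable def Gs (s t : ℝ) : ℝ := Fs s t * FsDeriv s t

noncomputable def GsDeriv (s t : ℝ) : ℝ :=
  if |t| ≤ 1 then
    ∑ ij : Fin 3 × Fin 3, cutoffCoeff ij.1 * cutoffCoeff ij.2 *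
      (cutoffExp s ij.1 + cutoffExp s ij.2) / 2 *
      ((cutoffExp s ij.1 + cutoffExp s ij.2 - 1) * |t| ^ (cutoffExp s ij.1 + cutoffExp s ij.2 - 2))
  else s * (2 * s - 1) * |t| ^ (2 * s - 2)

theorem hasDerivAt_Gs {s : ℝ} (hs : 1 / 2 < s) (t : ℝ) : HasDerivAt (Gs s) (GsDeriv s t) t := by
  have hG : Gs s = fun t => if |t| ≤ 1 then
      (∑ i, cutoffCoeff i * |t| ^ cutoffExp s i) *
        ∑ i, cutoffCoeff i * (cutoffExp s i * |t| ^ (cutoffExp s i - 2) * t)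
      else |t| ^ s * (s * |t| ^ (s - 2) * t) := by
    ext t
    rw [Gs, FsDeriv, Fs_eq_ite (by linarith)]
    beta_reduce
    split_ifs <;> rfl
  rw [hG]
  exact hasDerivAt_ite_le continuous_abs.continuousAt
    (fun _ => hasDerivAt_sum_abs_rpow_mul_deriv (one_lt_cutoffExp hs) t)
    (fun ht => hasDerivAt_abs_rpow_mul_deriv_of_ne_zero s (abs_pos.1 (one_pos.trans_le ht)))
    (fun _ hu => by rw [sum_cutoff_of_abs_eq_one hu, sum_cutoff_deriv_of_abs_eq_one hu])
    sum_cutoff_mul_deriv_deriv_of_abs_eq_one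

theorem continuous_GsDeriv {s : ℝ} (hs : 1 / 2 < s) : Continuous (GsDeriv s) := by
  refine continuous_if_le continuous_abs continuous_const ?_ ?_
    fun t ht => sum_cutoff_mul_deriv_deriv_of_abs_eq_one ht
  · refine (continuous_finsetSum _ fun ij _ => continuous_const.mul (continuous_const.mul
      (continuous_abs.rpow_const fun _ => Or.inr ?_))).continuousOn
    linarith [one_lt_cutoffExp hs ij.1, one_lt_cutoffExp hs ij.2]
  · exact continuousOn_const.mul (continuous_abs.continuousOn.rpow_const
      fun t ht => Or.inl (one_pos.trans_le ht).ne')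

theorem GsDeriv_eqOn_compl_Icc (s : ℝ) :
    EqOn (GsDeriv s) (fun t => s * (2 * s - 1) * max |t| 1 ^ (2 * s - 2)) (Icc (-1) 1)ᶜ := by
  intro t ht
  have ht' : 1 < |t| := lt_of_not_ge fun h => ht (abs_le.1 h)
  simp only [GsDeriv, if_neg ht'.not_ge, max_eq_left ht'.le]

theorem exists_bound_GsDeriv {s : ℝ} (hs1 : 1 / 2 < s) (hs2 : s ≤ 1) :
    ∃ M, ∀ t, |GsDeriv s t| ≤ M := by
  refine (continuous_GsDeriv hs1).exists_bound_of_eqOn_compl isCompact_Icc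
    (GsDeriv_eqOn_compl_Icc s) (M := s * (2 * s - 1)) fun t => ?_
  have hmax : 1 ≤ max |t| 1 := le_max_right _ _
  rw [norm_mul, Real.norm_of_nonneg (by nlinarith),
    Real.norm_of_nonneg (rpow_nonneg (zero_le_one.trans hmax) _)]
  exact mul_le_of_le_one_right (by nlinarith) (rpow_le_one_of_one_le_of_nonpos hmax (by linarith))

theorem uniformContinuous_GsDeriv {s : ℝ} (hs1 : 1 / 2 < s) (hs2 : s ≤ 1) :
    UniformContinuous (GsDeriv s) :=
  (continuous_GsDeriv hs1).uniformContinuous_of_eqOn_compl isCompact_Icc (GsDeriv_eqOn_compl_Icc s)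
    ((lipschitzWith_max_abs_one_rpow (by linarith)).uniformContinuous.const_smul (s * (2 * s - 1)))

/-- For `s ∈ (1/2, 1]`, the function `G_s = F_s · F_s'` is continuously differentiable on
`ℝ`, and `G_s'` is bounded and uniformly continuous on `ℝ`. -/
theorem stmt_13 (s : ℝ) (hs1 : 1 / 2 < s) (hs2 : s ≤ 1) :
    ContDiff ℝ 1 (fun t => Fs s t * deriv (Fs s) t) ∧
    (∃ M : ℝ, ∀ t : ℝ, |deriv (fun u => Fs s u * deriv (Fs s) u) t| ≤ M) ∧
    UniformContinuous (deriv (fun u => Fs s u * deriv (Fs s) u)) := by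
  have hG : (fun t => Fs s t * deriv (Fs s) t) = Gs s := by
    rw [funext fun t => (hasDerivAt_Fs hs1 t).deriv]
    rfl
  have hG' : deriv (Gs s) = GsDeriv s := funext fun t => (hasDerivAt_Gs hs1 t).deriv
  rw [hG, hG']
  exact ⟨contDiff_one_iff_deriv.2 ⟨fun t => (hasDerivAt_Gs hs1 t).differentiableAt,
    hG' ▸ continuous_GsDeriv hs1⟩, exists_bound_GsDeriv hs1 hs2, uniformContinuous_GsDeriv hs1 hs2⟩
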